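/- Intersections of half-trek witnesses occur only at instruments (Appendix Corollary): Let (z₁,W₁,p₁),…,(z_k,W_k,p_k) be a GIS-witness for E = {(x₁,y),…,(x_k,y)} in an acyclic mixed graph G in which every p_i is a half-trek from z_i. Then for any i ≠ j, every vertex lying on both p_i and p_j is one of the instrumental variables z₁,…,z_k; in particular, p_i and p_j can intersect only at z_i or z_j. -/

import Mathlib

open scoped Classical Matrix

namespace SEMPaper

/-- The kind of a step along a path in a mixed graph, relative to the direction of travel:
a forward directed edge, a backward directed edge, or a bidirected edge. -/
inductive EKind : Type
  | fwd | bwd | bi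
deriving DecidableEq

/-- An acyclic mixed graph: directed edges `dir`, bidirected edges `bi` (symmetric), with
acyclic directed part. -/
structure MixedGraph (V : Type) where
  dir : V → V → Prop
  bi : V → V → Prop
  bi_symm : ∀ {i j}, bi i j → bi j i
  acyclic : Irreflexive (Relation.TransGen dir)

namespace MixedGraph

variable {V : Type} (G : MixedGraph V)

/-- `v` is a descendant of `u`: reachable from `u` by a directed path (including `u` itself). -/
def desc (u v : V) : Prop := Relation.ReflTransGen G.dir u v

/-- `G_{E−}`: the graph `G` with the directed edges in `E` deleted. -/
def deleteDir (E : Set (V × V)) : MixedGraph V where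
  dir i j := G.dir i j ∧ (i, j) ∉ E
  bi := G.bi
  bi_symm h := G.bi_symm h
  acyclic v h := G.acyclic v (by
    have key : ∀ a b : V, Relation.TransGen (fun i j => G.dir i j ∧ (i, j) ∉ E) a b →
        Relation.TransGen G.dir a b := by
      intro a b hh
      induction hh with
      | single hab => exact Relation.TransGen.single hab.1
      | tail _ hab ih => exact Relation.TransGen.tail ih hab.1
    exact key v v h)

/-- Validity of a single step from `a` to `b` of kind `k`. -/
def stepOK (a b : V) : EKind → Prop
  | .fwd => G.dir a b
  | .bwd => G.dir b a
  | .bi => G.bi a b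

end MixedGraph

/-- Walks in a mixed graph: sequences of consecutive steps along directed edges (in either
direction) or bidirected edges. -/
inductive Walk {V : Type} (G : MixedGraph V) : V → V → Type
  | nil (v : V) : Walk G v v
  | cons {a b c : V} (k : EKind) (h : G.stepOK a b k) (w : Walk G b c) : Walk G a c

namespace Walk

variable {V : Type} {G : MixedGraph V}

/-- The list of vertices visited by a walk. -/
def support : ∀ {x y : V}, Walk G x y → List V
  | _, _, .nil v => [v]
  | x, _, .cons _ _ w => x :: w.support

/-- The list of steps of a walk: (source, target, kind). -/
def darts : ∀ {x y : V}, Walk G x y → List (V × V × EKind)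
  | _, _, .nil _ => []
  | _, _, @Walk.cons _ _ x b _ k _ w => (x, b, k) :: w.darts

/-- A path is a walk visiting distinct vertices. -/
def IsPath {x y : V} (w : Walk G x y) : Prop := w.support.Nodup

/-- A vertex with incoming step of kind `kin` and outgoing step of kind `kout` is a collider
iff both adjacent edges point into it. -/
def isColl : EKind → EKind → Bool
  | .fwd, .bwd => true
  | .fwd, .bi => true
  | .bi, .bwd => true
  | .bi, .bi => true
  | _, _ => false

/-- Auxiliary predicate: the walk, whose first vertex was entered via a step of kind `kin`,
is unblocked given `W` (each internal vertex: colliders are in `W` or have a descendant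
in `W`; non-colliders are outside `W`). -/
def UnblockedFrom (W : Set V) : ∀ {x y : V}, EKind → Walk G x y → Prop
  | _, _, _, .nil _ => True
  | x, _, kin, .cons k _ w =>
      (if isColl kin k then ∃ d ∈ W, G.desc x d else x ∉ W) ∧ UnblockedFrom W k w

/-- The walk is unblocked given `W`. -/
def Unblocked (W : Set V) : ∀ {x y : V}, Walk G x y → Prop
  | _, _, .nil _ => True
  | _, _, .cons k _ w => UnblockedFrom W k w

/-- `Left(π)`: the start vertex of `π` together with every vertex with a directed edge of `π`
leaving it in the direction of the start. -/
def Left {x y : V} (w : Walk G x y) : Set V :=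
  insert x {v | ∃ a, (a, v, EKind.bwd) ∈ w.darts}

/-- `Right(π)`: the end vertex of `π` together with every vertex with a directed edge of `π`
leaving it in the direction of the end. -/
def Right {x y : V} (w : Walk G x y) : Set V :=
  insert y {v | ∃ b, (v, b, EKind.fwd) ∈ w.darts}

/-- The walk traverses the directed edge `a → b` (in either direction of travel). -/
def UsesDirEdge {x y : V} (w : Walk G x y) (a b : V) : Prop :=
  (a, b, EKind.fwd) ∈ w.darts ∨ (b, a, EKind.bwd) ∈ w.darts

/-- The directed edges traversed by the walk. -/
def dirEdges {x y : V} (w : Walk G x y) : Set (V × V) :=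
  {e | (e.1, e.2, EKind.fwd) ∈ w.darts ∨ (e.2, e.1, EKind.bwd) ∈ w.darts}

/-- The bidirected edges traversed by the walk (up to orientation). -/
def biEdges {x y : V} (w : Walk G x y) : Set (V × V) :=
  {e | (e.1, e.2, EKind.bi) ∈ w.darts ∨ (e.2, e.1, EKind.bi) ∈ w.darts}

/-- A half-trek from the start vertex: a directed path, optionally preceded by a single
initial bidirected edge. -/
def IsHalfTrek : ∀ {x y : V}, Walk G x y → Prop
  | _, _, .nil _ => True
  | _, _, .cons k _ w => k ≠ EKind.bwd ∧ ∀ d ∈ w.darts, d.2.2 = EKind.fwd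

/-- The subpath of `w` from `v` to the end points into `v` (the edge of `w` adjacent to `v` on
the end-side has its arrowhead at `v`). -/
def pointsBackAt {x y : V} (w : Walk G x y) (v : V) : Prop :=
  ∃ b k, (v, b, k) ∈ w.darts ∧ k ≠ EKind.fwd

/-- The subpath of `w` from the start to `v` points into `v` (the edge of `w` adjacent to `v`
on the start-side has its arrowhead at `v`). -/
def pointsForwardAt {x y : V} (w : Walk G x y) (v : V) : Prop :=
  ∃ a k, (a, v, k) ∈ w.darts ∧ k ≠ EKind.bwd

end Walk

/-- d-separation: `x` and `y` are d-separated given `W` in `G` if no path between them is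
unblocked given `W`. -/
def MixedGraph.dsep {V : Type} (G : MixedGraph V) (x y : V) (W : Set V) : Prop :=
  ∀ w : Walk G x y, w.IsPath → ¬ w.Unblocked W


/-- A GIS-witness for `E = {(x i, y)}`: for each `i`, `W_i` contains no descendants of `y`
and `z_i ⫫ y` given `W_i` in `G_{E−}`; `p_i` is a path between `z_i` and `x_i` unblocked
given `W_i`; and the paths have no sided intersection. -/
def GISWitness {V : Type} (G : MixedGraph V) {k : ℕ} (x : Fin k → V) (y : V)
    (z : Fin k → V) (Wc : Fin k → Set V) (p : ∀ i, Walk G (z i) (x i)) : Prop :=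
  (∀ i, (∀ w ∈ Wc i, ¬ G.desc y w) ∧
    (G.deleteDir {e | ∃ j, e = (x j, y)}).dsep (z i) y (Wc i)) ∧
  (∀ i, (p i).IsPath ∧ (p i).Unblocked (Wc i)) ∧
  (∀ i j, i ≠ j → (p i).Left ∩ (p j).Left = ∅ ∧ (p i).Right ∩ (p j).Right = ∅)

/-!
Past its first step a half-trek is a directed path, so each of its vertices other than the start
is the tail of one of its edges or its end, i.e. lies in `Right`. Since distinct witness paths
have disjoint `Right` sets, a common vertex must be the start of one of them.
-/

namespace Walk

variable {V : Type} {G : MixedGraph V}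

theorem mem_right_of_forall_fwd {x y : V} (w : Walk G x y)
    (hfwd : ∀ d ∈ w.darts, d.2.2 = EKind.fwd) : ∀ v ∈ w.support, v ∈ w.Right := by
  induction w with
  | nil u => simp [support, Right]
  | cons k h w ih =>
    have hk : k = EKind.fwd := hfwd _ List.mem_cons_self
    subst hk
    intro v hv
    rcases List.mem_cons.mp hv with rfl | hv
    · exact Or.inr ⟨_, List.mem_cons_self⟩
    · rcases ih (fun d hd => hfwd d (List.mem_cons_of_mem _ hd)) v hv with hvy | ⟨b, hb⟩
      · exact Or.inl hvy
      · exact Or.inr ⟨b, List.mem_cons_of_mem _ hb⟩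

theorem IsHalfTrek.eq_start_or_mem_right {x y : V} {w : Walk G x y} (hw : w.IsHalfTrek) :
    ∀ v ∈ w.support, v = x ∨ v ∈ w.Right := by
  cases w with
  | nil u => simp [support]
  | cons k h w =>
    intro v hv
    rcases List.mem_cons.mp hv with rfl | hv
    · exact Or.inl rfl
    · rcases mem_right_of_forall_fwd w hw.2 v hv with hvy | ⟨b, hb⟩
      · exact Or.inr (Or.inl hvy)
      · exact Or.inr (Or.inr ⟨b, List.mem_cons_of_mem _ hb⟩)

theorem IsHalfTrek.eq_start_or_eq_start_of_right_disjoint {a b c d : V}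
    {w₁ : Walk G a b} {w₂ : Walk G c d} (h₁ : w₁.IsHalfTrek) (h₂ : w₂.IsHalfTrek)
    (hdisj : w₁.Right ∩ w₂.Right = ∅) {v : V} (hv₁ : v ∈ w₁.support) (hv₂ : v ∈ w₂.support) :
    v = a ∨ v = c := by
  rcases h₁.eq_start_or_mem_right v hv₁ with hva | hr₁
  · exact Or.inl hva
  rcases h₂.eq_start_or_mem_right v hv₂ with hvc | hr₂
  · exact Or.inr hvc
  exact (Set.eq_empty_iff_forall_notMem.mp hdisj v ⟨hr₁, hr₂⟩).elim

end Walk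

theorem gis_halftrek_intersections_at_instruments_general {V : Type} (G : MixedGraph V)
    (k : ℕ) (x : Fin k → V) (y : V)
    (z : Fin k → V) (Wc : Fin k → Set V) (p : ∀ i, Walk G (z i) (x i))
    (hw : GISWitness G x y z Wc p) (hht : ∀ i, (p i).IsHalfTrek) :
    ∀ i j, i ≠ j → ∀ v : V, v ∈ (p i).support → v ∈ (p j).support →
      (∃ l, v = z l) ∧ (v = z i ∨ v = z j) := by
  intro i j hij v hvi hvj
  have hvz : v = z i ∨ v = z j :=
    (hht i).eq_start_or_eq_start_of_right_disjoint (hht j) (hw.2.2 i j hij).2 hvi hvj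
  exact ⟨hvz.elim (⟨i, ·⟩) (⟨j, ·⟩), hvz⟩

/-- **Intersections of half-trek witnesses occur only at instruments.** In a GIS-witness
whose paths are all half-treks, two distinct paths `p_i` and `p_j` can only share vertices
among the instruments, and in fact only `z_i` or `z_j`. -/
theorem gis_halftrek_intersections_at_instruments {V : Type} (G : MixedGraph V)
    (k : ℕ) (x : Fin k → V) (y : V) (hE : ∀ i, G.dir (x i) y)
    (z : Fin k → V) (Wc : Fin k → Set V) (p : ∀ i, Walk G (z i) (x i))
    (hw : GISWitness G x y z Wc p) (hht : ∀ i, (p i).IsHalfTrek) :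
    ∀ i j, i ≠ j → ∀ v : V, v ∈ (p i).support → v ∈ (p j).support →
      (∃ l, v = z l) ∧ (v = z i ∨ v = z j) :=
  gis_halftrek_intersections_at_instruments_general G k x y z Wc p hw hht

end SEMPaper
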